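/- Let T be a timed automaton over a product alphabet Σ_I × Σ_O and let T' be the deterministic timed automaton over the alphabet (Σ_I × Σ_O) × Δ obtained by making each input letter name the transition of T to take. If T is history-deterministic, then Player 2 wins the synthesis game for L(T) if and only if she wins the synthesis game for L(T'). -/

import Mathlib

open scoped NNReal

/-- Clock constraints (guards): Boolean combinations of `x ≤ n`, `x < n`,
`x − y ≤ n`, `x − y < n`. -/
inductive Guard (C : Type) where
  | tt : Guard C
  | le (x : C) (n : ℕ) : Guard C
  | lt (x : C) (n : ℕ) : Guard C
  | dle (x y : C) (n : ℕ) : Guard C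
  | dlt (x y : C) (n : ℕ) : Guard C
  | band (g₁ g₂ : Guard C) : Guard C
  | bnot (g : Guard C) : Guard C

/-- Satisfaction of a guard by a clock valuation. -/
def Guard.sat {C : Type} : Guard C → (C → ℝ≥0) → Prop
  | .tt, _ => True
  | .le x n, ν => (ν x : ℝ) ≤ n
  | .lt x n, ν => (ν x : ℝ) < n
  | .dle x y n, ν => (ν x : ℝ) - (ν y : ℝ) ≤ n
  | .dlt x y n, ν => (ν x : ℝ) - (ν y : ℝ) < n
  | .band g₁ g₂, ν => g₁.sat ν ∧ g₂.sat ν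
  | .bnot g, ν => ¬ g.sat ν

/-- The largest constant appearing in a guard in a constraint involving clock `z`. -/
def Guard.maxConst {C : Type} [DecidableEq C] : Guard C → C → ℕ
  | .tt, _ => 0
  | .le x n, z => if z = x then n else 0
  | .lt x n, z => if z = x then n else 0
  | .dle x y n, z => if z = x ∨ z = y then n else 0
  | .dlt x y n, z => if z = x ∨ z = y then n else 0
  | .band g₁ g₂, z => max (g₁.maxConst z) (g₂.maxConst z)
  | .bnot g, z => g.maxConst z

/-- A transition of a timed automaton: source, guard, letter, reset set, destination. -/
structure Tr (Q C A : Type) where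
  src : Q
  guard : Guard C
  letter : A
  reset : Set C
  dst : Q

/-- A timed automaton (the acceptance condition is kept as a separate parameter). -/
structure TA (Q C A : Type) where
  init : Q
  trans : Set (Tr Q C A)

namespace TA

variable {Q C A : Type}

/-- The valuation obtained from `ν` by resetting the clocks of transition `τ`. -/
noncomputable def resetVal (τ : Tr Q C A) (ν : C → ℝ≥0) : C → ℝ≥0 :=
  fun x => open Classical in if x ∈ τ.reset then 0 else ν x


/-- Timed words: infinite sequences of letters with strictly increasing timestamps. -/
def IsTimedWord (w : ℕ → A × ℝ≥0) : Prop :=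
  StrictMono fun n => (w n).2

/-- The delay elapsing before the `n`-th event of the timed word `w`. -/
noncomputable def delayAt (w : ℕ → A × ℝ≥0) (n : ℕ) : ℝ≥0 :=
  (w n).2 - (if n = 0 then 0 else (w (n - 1)).2)

/-- The configurations visited along the transition sequence `ρ` on the timed word `w`:
before each discrete step, time elapses up to the next timestamp. -/
noncomputable def configs (T : TA Q C A) (w : ℕ → A × ℝ≥0) (ρ : ℕ → Tr Q C A) :
    ℕ → Q × (C → ℝ≥0)
  | 0 => (T.init, fun _ => 0)
  | n + 1 => ((ρ n).dst, resetVal (ρ n) (fun x => (configs T w ρ n).2 x + delayAt w n))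

/-- `ρ` is a run of `T` on the timed word `w` from the initial configuration. -/
def IsRunOn (T : TA Q C A) (w : ℕ → A × ℝ≥0) (ρ : ℕ → Tr Q C A) : Prop :=
  ∀ n, ρ n ∈ T.trans ∧ (ρ n).letter = (w n).1 ∧ (ρ n).src = (T.configs w ρ n).1 ∧
    (ρ n).guard.sat (fun x => (T.configs w ρ n).2 x + delayAt w n)

/-- The timed language of `T` for the acceptance condition `Acc` on runs. -/
def Lang (T : TA Q C A) (Acc : (ℕ → Tr Q C A) → Prop) : Set (ℕ → A × ℝ≥0) :=
  {w | IsTimedWord w ∧ ∃ ρ, T.IsRunOn w ρ ∧ Acc ρ}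

/-- Safety acceptance: all states along the run stay in the safe set. -/
def safetyAcc (safe : Set Q) (ρ : ℕ → Tr Q C A) : Prop :=
  ∀ n, (ρ n).src ∈ safe ∧ (ρ n).dst ∈ safe

/-- Reachability acceptance: the run visits a state of the target set. -/
def reachAcc (F : Set Q) (ρ : ℕ → Tr Q C A) : Prop :=
  ∃ n, (ρ n).src ∈ F ∨ (ρ n).dst ∈ F

/-- The finite history (timed letters paired with chosen transitions) built by iterating
a candidate resolver `r` on the timed word `w`. -/
def histOf (r : List ((A × ℝ≥0) × Tr Q C A) → (A × ℝ≥0) → Tr Q C A)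
    (w : ℕ → A × ℝ≥0) : ℕ → List ((A × ℝ≥0) × Tr Q C A)
  | 0 => []
  | n + 1 => histOf r w n ++ [(w n, r (histOf r w n) (w n))]

/-- The run built by iterating the resolver `r` on the timed word `w`. -/
def runOf (r : List ((A × ℝ≥0) × Tr Q C A) → (A × ℝ≥0) → Tr Q C A)
    (w : ℕ → A × ℝ≥0) (n : ℕ) : Tr Q C A :=
  r (histOf r w n) (w n)

/-- `r` is a resolver for `T` with acceptance `Acc`. -/
def IsResolver (T : TA Q C A) (Acc : (ℕ → Tr Q C A) → Prop)
    (r : List ((A × ℝ≥0) × Tr Q C A) → (A × ℝ≥0) → Tr Q C A) : Prop :=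
  ∀ w ∈ T.Lang Acc, T.IsRunOn w (runOf r w) ∧ Acc (runOf r w)

/-- History-determinism: existence of a resolver. -/
def HD (T : TA Q C A) (Acc : (ℕ → Tr Q C A) → Prop) : Prop :=
  ∃ r, T.IsResolver Acc r

/-- Determinism: transitions from the same state over the same letter have mutually
exclusive guards. -/
def Deterministic (T : TA Q C A) : Prop :=
  ∀ τ₁ ∈ T.trans, ∀ τ₂ ∈ T.trans, τ₁.src = τ₂.src → τ₁.letter = τ₂.letter →
    τ₁ ≠ τ₂ → ∀ ν : C → ℝ≥0, ¬(τ₁.guard.sat ν ∧ τ₂.guard.sat ν)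

end TA

open scoped NNReal

namespace TA

variable {AI AO : Type}

/-- History of a synthesis play: Player 1 plays delays and input letters with strategy
`f`, Player 2 answers output letters with strategy `σ`. -/
def synHist (f : List (ℝ≥0 × AI × AO) → ℝ≥0 × AI)
    (σ : List (ℝ≥0 × AI × AO) → ℝ≥0 × AI → AO) : ℕ → List (ℝ≥0 × AI × AO)
  | 0 => []
  | n + 1 => synHist f σ n ++
      [((f (synHist f σ n)).1, (f (synHist f σ n)).2,
        σ (synHist f σ n) (f (synHist f σ n)))]

/-- The timed word over `AI × AO` produced in the synthesis game. -/
noncomputable def synWord (f : List (ℝ≥0 × AI × AO) → ℝ≥0 × AI)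
    (σ : List (ℝ≥0 × AI × AO) → ℝ≥0 × AI → AO) : ℕ → (AI × AO) × ℝ≥0 :=
  fun n => (((f (synHist f σ n)).2, σ (synHist f σ n) (f (synHist f σ n))),
    ∑ i ∈ Finset.range (n + 1), (f (synHist f σ i)).1)

/-- Time diverges along a timed word. -/
def NonZeno {A : Type} (w : ℕ → A × ℝ≥0) : Prop :=
  ∀ B : ℝ, ∃ n, B < ((w n).2 : ℝ)

/-- Player 2 wins the synthesis game for the timed language `L`: she has a strategy such
that against every Player-1 strategy the produced timed word is in `L`, or time does not
progress. -/
def P2WinsSynth (L : Set (ℕ → (AI × AO) × ℝ≥0)) : Prop :=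
  ∃ σ, ∀ f, synWord f σ ∈ L ∨ ¬ NonZeno (synWord f σ)

variable {Q C : Type}

/-- The determinized automaton `T'` over the alphabet `(AI × AO) × Δ`, in which each
input letter names the transition of `T` to take. -/
def primed (T : TA Q C (AI × AO)) : TA Q C ((AI × AO) × Tr Q C (AI × AO)) :=
  { init := T.init,
    trans := {τ' | ∃ τ ∈ T.trans,
      τ' = ⟨τ.src, τ.guard, (τ.letter, τ), τ.reset, τ.dst⟩} }

/-- The acceptance condition of `T'`, inherited from that of `T` through the named
transitions. -/
def primedAcc (Acc : (ℕ → Tr Q C (AI × AO)) → Prop)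
    (ρ' : ℕ → Tr Q C ((AI × AO) × Tr Q C (AI × AO))) : Prop :=
  Acc fun n => (ρ' n).letter.2

end TA

/-!
A winning strategy for `T'` gives one for `T` by dropping the named transitions: an
accepting run of `T'` on an annotated word is an accepting run of `T` on the plain word.
Conversely, a winning strategy `σ` for `T` is made to name transitions by feeding the timed
word played so far to the resolver; the word is in `L(T)`, so the resolver's run on it is
accepting and the annotated word is in `L(T')`. In both directions a Player-1 strategy of
one game is simulated in the other by replaying histories.
-/

namespace Tr

variable {Q C A : Type}

def named (τ : Tr Q C A) : Tr Q C (A × Tr Q C A) :=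
  ⟨τ.src, τ.guard, (τ.letter, τ), τ.reset, τ.dst⟩

end Tr

namespace TA

variable {Q C AI AO AO' X : Type}

section Replay

variable (π : AO' → AO)

def projHist : List (ℝ≥0 × AI × AO') → List (ℝ≥0 × AI × AO) :=
  List.map fun x => (x.1, x.2.1, π x.2.2)

/-- Player 1's moves of `h`, with Player 2's answers recomputed by `σ'`. -/
def replay (σ' : List (ℝ≥0 × AI × AO') → ℝ≥0 × AI → AO') (h : List (ℝ≥0 × AI × AO)) :
    List (ℝ≥0 × AI × AO') :=
  h.foldl (fun h' x => h' ++ [(x.1, x.2.1, σ' h' (x.1, x.2.1))]) []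

theorem replay_append_singleton (σ' : List (ℝ≥0 × AI × AO') → ℝ≥0 × AI → AO')
    (h : List (ℝ≥0 × AI × AO)) (x : ℝ≥0 × AI × AO) :
    replay σ' (h ++ [x]) = replay σ' h ++ [(x.1, x.2.1, σ' (replay σ' h) (x.1, x.2.1))] := by
  simp [replay, List.foldl_append]

def mapOutput (w : ℕ → (AI × AO') × ℝ≥0) : ℕ → (AI × AO) × ℝ≥0 :=
  fun n => (((w n).1.1, π (w n).1.2), (w n).2)

variable {f : List (ℝ≥0 × AI × AO) → ℝ≥0 × AI} {σ : List (ℝ≥0 × AI × AO) → ℝ≥0 × AI → AO}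
  {f' : List (ℝ≥0 × AI × AO') → ℝ≥0 × AI} {σ' : List (ℝ≥0 × AI × AO') → ℝ≥0 × AI → AO'}

theorem synHist_eq_replay
    (hcompat : ∀ h, projHist π (replay σ' h) = h →
      f' (replay σ' h) = f h ∧ ∀ p, π (σ' (replay σ' h) p) = σ h p) (n : ℕ) :
    replay σ' (synHist f σ n) = synHist f' σ' n ∧
      projHist π (synHist f' σ' n) = synHist f σ n := by
  induction n with
  | zero => exact ⟨rfl, rfl⟩
  | succ n ih =>
    obtain ⟨hrep, hproj⟩ := ih
    obtain ⟨hf, hσ⟩ := hcompat _ (hrep ▸ hproj)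
    rw [hrep] at hf hσ
    refine ⟨?_, ?_⟩
    · rw [synHist, synHist, replay_append_singleton, hrep, hf]
    · rw [synHist, synHist, projHist, List.map_append, ← projHist, hproj]
      simp only [projHist, List.map_cons, List.map_nil, hf, hσ]

theorem mapOutput_synWord
    (hcompat : ∀ h, projHist π (replay σ' h) = h →
      f' (replay σ' h) = f h ∧ ∀ p, π (σ' (replay σ' h) p) = σ h p) :
    mapOutput π (synWord f' σ') = synWord f σ := by
  have hmove : ∀ n, f' (synHist f' σ' n) = f (synHist f σ n) ∧
      ∀ p, π (σ' (synHist f' σ' n) p) = σ (synHist f σ n) p := fun n => by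
    obtain ⟨hrep, hproj⟩ := synHist_eq_replay π hcompat n
    rw [← hrep]
    exact hcompat _ (hrep ▸ hproj)
  have hf n := (hmove n).1
  funext n
  simp only [mapOutput, synWord, hf, (hmove n).2]

theorem nonZeno_mapOutput_iff (w : ℕ → (AI × AO') × ℝ≥0) :
    NonZeno (mapOutput π w) ↔ NonZeno w :=
  Iff.rfl

end Replay

section Resolver

def delaySum (h : List (ℝ≥0 × AI × AO)) : ℝ≥0 :=
  (h.map Prod.fst).sum

theorem delaySum_synHist (f : List (ℝ≥0 × AI × AO) → ℝ≥0 × AI)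
    (σ : List (ℝ≥0 × AI × AO) → ℝ≥0 × AI → AO) (n : ℕ) :
    delaySum (synHist f σ n) = ∑ i ∈ Finset.range n, (f (synHist f σ i)).1 := by
  induction n with
  | zero => simp [delaySum, synHist]
  | succ n ih =>
    rw [Finset.sum_range_succ, ← ih]
    simp [delaySum, synHist]

theorem synWord_snd (f : List (ℝ≥0 × AI × AO) → ℝ≥0 × AI)
    (σ : List (ℝ≥0 × AI × AO) → ℝ≥0 × AI → AO) (n : ℕ) :
    (synWord f σ n).2 = delaySum (synHist f σ n) + (f (synHist f σ n)).1 := by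
  rw [delaySum_synHist, ← Finset.sum_range_succ]
  rfl

/-- A history of the annotated game as a resolver history: timed letters with absolute
timestamps, each paired with its annotation. -/
def timedHist : List (ℝ≥0 × AI × (AO × X)) → List (((AI × AO) × ℝ≥0) × X)
  | [] => []
  | x :: h => (((x.2.1, x.2.2.1), x.1), x.2.2.2) ::
      (timedHist h).map fun e => ((e.1.1, x.1 + e.1.2), e.2)

theorem timedHist_append_singleton (h : List (ℝ≥0 × AI × (AO × X))) (x : ℝ≥0 × AI × (AO × X)) :
    timedHist (h ++ [x]) = timedHist h ++ [(((x.2.1, x.2.2.1), delaySum h + x.1), x.2.2.2)] := by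
  induction h with
  | nil => simp [timedHist, delaySum]
  | cons y h ih => simp [timedHist, delaySum, ih, add_assoc]

/-- Player 2's strategy in the annotated game: answer as `σ` does and name the transition
that the resolver `r` picks on the timed word played so far. -/
def resolverStrategy
    (r : List (((AI × AO) × ℝ≥0) × Tr Q C (AI × AO)) → (AI × AO) × ℝ≥0 → Tr Q C (AI × AO))
    (σ : List (ℝ≥0 × AI × AO) → ℝ≥0 × AI → AO) :
    List (ℝ≥0 × AI × (AO × Tr Q C (AI × AO))) → ℝ≥0 × AI → AO × Tr Q C (AI × AO) :=
  fun h p =>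
    let b := σ (projHist Prod.fst h) p
    (b, r (timedHist h) ((p.2, b), delaySum h + p.1))

variable
  (r : List (((AI × AO) × ℝ≥0) × Tr Q C (AI × AO)) → (AI × AO) × ℝ≥0 → Tr Q C (AI × AO))
  (σ : List (ℝ≥0 × AI × AO) → ℝ≥0 × AI → AO)
  (f' : List (ℝ≥0 × AI × (AO × Tr Q C (AI × AO))) → ℝ≥0 × AI)

theorem mapOutput_fst_synWord_resolverStrategy (n : ℕ) :
    mapOutput Prod.fst (synWord f' (resolverStrategy r σ)) n =
      (((f' (synHist f' (resolverStrategy r σ) n)).2,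
        σ (projHist Prod.fst (synHist f' (resolverStrategy r σ) n))
          (f' (synHist f' (resolverStrategy r σ) n))),
        delaySum (synHist f' (resolverStrategy r σ) n) +
          (f' (synHist f' (resolverStrategy r σ) n)).1) :=
  Prod.ext rfl (synWord_snd _ _ n)

theorem timedHist_synHist_resolverStrategy (n : ℕ) :
    timedHist (synHist f' (resolverStrategy r σ) n) =
      histOf r (mapOutput Prod.fst (synWord f' (resolverStrategy r σ))) n := by
  induction n with
  | zero => rfl
  | succ n ih =>
    rw [synHist, timedHist_append_singleton, histOf, ← ih,
      mapOutput_fst_synWord_resolverStrategy]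
    rfl

theorem annotation_synWord_resolverStrategy (n : ℕ) :
    (synWord f' (resolverStrategy r σ) n).1.2.2 =
      runOf r (mapOutput Prod.fst (synWord f' (resolverStrategy r σ))) n := by
  rw [runOf, ← timedHist_synHist_resolverStrategy, mapOutput_fst_synWord_resolverStrategy]
  rfl

end Resolver

section Primed

variable (T : TA Q C (AI × AO)) (Acc : (ℕ → Tr Q C (AI × AO)) → Prop)

/-- The language of `T'` as a winning condition of the game in which Player 2's outputs
carry the transition of `T` they name. -/
def primedGameLang : Set (ℕ → (AI × (AO × Tr Q C (AI × AO))) × ℝ≥0) :=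
  {w | (fun n => ((((w n).1.1, (w n).1.2.1), (w n).1.2.2), (w n).2)) ∈
    (primed T).Lang (primedAcc Acc)}

variable (w' : ℕ → ((AI × AO) × Tr Q C (AI × AO)) × ℝ≥0)

theorem configs_primed_named (ρ : ℕ → Tr Q C (AI × AO)) (n : ℕ) :
    (primed T).configs w' (fun n => (ρ n).named) n =
      T.configs (fun n => ((w' n).1.1, (w' n).2)) ρ n := by
  induction n with
  | zero => rfl
  | succ n ih => simp only [configs, ih]; rfl

theorem isRunOn_primed_iff (ρ' : ℕ → Tr Q C ((AI × AO) × Tr Q C (AI × AO))) :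
    (primed T).IsRunOn w' ρ' ↔ ρ' = (fun n => ((w' n).1.2).named) ∧
      T.IsRunOn (fun n => ((w' n).1.1, (w' n).2)) (fun n => (w' n).1.2) := by
  constructor
  · intro hrun
    have hnamed : ∀ n, (w' n).1.2 ∈ T.trans ∧ ((w' n).1.2).letter = (w' n).1.1 ∧
        ρ' n = ((w' n).1.2).named := fun n => by
      obtain ⟨⟨τ, hτ, hρ⟩, hletter, -⟩ := hrun n
      rw [hρ] at hletter ⊢
      rw [← hletter]
      exact ⟨hτ, rfl, rfl⟩
    have hρ' : ρ' = fun n => ((w' n).1.2).named := funext fun n => (hnamed n).2.2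
    subst hρ'
    refine ⟨rfl, fun n => ⟨(hnamed n).1, (hnamed n).2.1, ?_⟩⟩
    rw [← configs_primed_named]
    exact (hrun n).2.2
  · rintro ⟨rfl, hrun⟩ n
    refine ⟨⟨_, (hrun n).1, rfl⟩, Prod.ext (hrun n).2.1 rfl, ?_⟩
    rw [configs_primed_named]
    exact (hrun n).2.2

theorem mem_primed_lang_iff :
    w' ∈ (primed T).Lang (primedAcc Acc) ↔ IsTimedWord w' ∧
      T.IsRunOn (fun n => ((w' n).1.1, (w' n).2)) (fun n => (w' n).1.2) ∧
      Acc (fun n => (w' n).1.2) := by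
  simp only [Lang, Set.mem_ofPred_eq, isRunOn_primed_iff]
  constructor
  · rintro ⟨htimed, _, ⟨rfl, hrun⟩, hacc⟩
    exact ⟨htimed, hrun, hacc⟩
  · rintro ⟨htimed, hrun, hacc⟩
    exact ⟨htimed, _, ⟨rfl, hrun⟩, hacc⟩

theorem mem_primedGameLang_iff (w : ℕ → (AI × (AO × Tr Q C (AI × AO))) × ℝ≥0) :
    w ∈ primedGameLang T Acc ↔ IsTimedWord (mapOutput Prod.fst w) ∧
      T.IsRunOn (mapOutput Prod.fst w) (fun n => (w n).1.2.2) ∧ Acc (fun n => (w n).1.2.2) :=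
  mem_primed_lang_iff T Acc _

theorem p2WinsSynth_primedGameLang_of_isResolver
    {r : List (((AI × AO) × ℝ≥0) × Tr Q C (AI × AO)) → (AI × AO) × ℝ≥0 → Tr Q C (AI × AO)}
    (hr : T.IsResolver Acc r) (hwin : P2WinsSynth (T.Lang Acc)) :
    P2WinsSynth (primedGameLang T Acc) := by
  obtain ⟨σ, hσ⟩ := hwin
  refine ⟨resolverStrategy r σ, fun f' => ?_⟩
  have hword : mapOutput Prod.fst (synWord f' (resolverStrategy r σ)) =
      synWord (fun h => f' (replay (resolverStrategy r σ) h)) σ :=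
    mapOutput_synWord Prod.fst fun _ hproj => ⟨rfl, fun p => congrArg (σ · p) hproj⟩
  rcases hσ (fun h => f' (replay (resolverStrategy r σ) h)) with hmem | hzeno
  · left
    rw [mem_primedGameLang_iff,
      funext (annotation_synWord_resolverStrategy r σ f'), hword]
    exact ⟨hmem.1, hr _ hmem⟩
  · right
    rwa [← nonZeno_mapOutput_iff Prod.fst, hword]

theorem p2WinsSynth_of_primedGameLang (hwin : P2WinsSynth (primedGameLang T Acc)) :
    P2WinsSynth (T.Lang Acc) := by
  obtain ⟨σ', hσ'⟩ := hwin
  refine ⟨fun h p => (σ' (replay σ' h) p).1, fun f => ?_⟩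
  have hword : mapOutput Prod.fst (synWord (fun h' => f (projHist Prod.fst h')) σ') =
      synWord f fun h p => (σ' (replay σ' h) p).1 :=
    mapOutput_synWord Prod.fst fun _ hproj => ⟨congrArg f hproj, fun _ => rfl⟩
  rcases hσ' (fun h' => f (projHist Prod.fst h')) with hmem | hzeno
  · left
    rw [mem_primedGameLang_iff, hword] at hmem
    exact ⟨hmem.1, _, hmem.2⟩
  · right
    rwa [← nonZeno_mapOutput_iff Prod.fst, hword] at hzeno

end Primed

end TA

/-- if `T` is history-deterministic, then Player 2 wins the synthesis game
for `L(T)` iff she wins the synthesis game for `L(T')`, where in the latter her output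
also names the transition of `T` to take. -/
theorem stmt17 {Q C AI AO : Type} (T : TA Q C (AI × AO))
    (Acc : (ℕ → Tr Q C (AI × AO)) → Prop) (hHD : T.HD Acc) :
    TA.P2WinsSynth (AI := AI) (AO := AO) (T.Lang Acc) ↔
    TA.P2WinsSynth (AI := AI) (AO := AO × Tr Q C (AI × AO))
      {w | (fun n => ((((w n).1.1, (w n).1.2.1), (w n).1.2.2), (w n).2)) ∈
        (TA.primed T).Lang (TA.primedAcc Acc)} := by
  obtain ⟨r, hr⟩ := hHD
  exact ⟨TA.p2WinsSynth_primedGameLang_of_isResolver T Acc hr,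
    TA.p2WinsSynth_of_primedGameLang T Acc⟩
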